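/- Let S(P) = K[a,b,c,d,x_1,y_1,…,x_{n-1},y_{n-1},x_n] (the polynomial ring in all variables except y_n), let m(P) be its graded maximal ideal, and let I(P) ⊂ S(P) be the monomial ideal generated by a^6, a^5b, ab^5, b^6, a^4b^4c, a^4b^4d, a^4x_iy_i^2, b^4x_i^2y_i for i = 1,…,n−1, together with a^4x_n and b^4x_n^2. Then for every even integer k = 2t with 1 ≤ t ≤ n, the monomial u' = a^8 b^4 · (a^4x_1y_1^2)(b^4x_1^2y_1) ⋯ (a^4x_{t-1}y_{t-1}^2)(b^4x_{t-1}^2y_{t-1}) · x_t y_t ⋯ x_{n-1} y_{n-1} · x_n satisfies u' ∈ (I(P)^k : m(P)) and u' ∉ I(P)^k; in particular depth(S(P)/I(P)^k) = 0. -/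

import Mathlib

open MvPolynomial

noncomputable section

/-- The depth of a module `M` with respect to an ideal `J`: the supremum of the lengths of
`M`-regular sequences consisting of elements of `J`. -/
noncomputable def depthWrt {R : Type*} [CommRing R] (J : Ideal R)
    (M : Type*) [AddCommGroup M] [Module R M] : ℕ∞ :=
  sSup {k : ℕ∞ | ∃ rs : List R, (rs.length : ℕ∞) = k ∧ (∀ r ∈ rs, r ∈ J) ∧
    RingTheory.Sequence.IsRegular M rs}

/-- The type of the variables `a, b, c, d, x₁, …, xₙ, y₁, …, y_{n-1}` of the
polynomial ring `S(P)` (all variables of `S` except `yₙ`). -/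
abbrev VarsP (n : ℕ) : Type := Fin 4 ⊕ Fin n ⊕ Fin (n - 1)

variable (K : Type*) [Field K] (n : ℕ)

/-- The variable `a` of `S(P)`. -/
def pa : MvPolynomial (VarsP n) K := X (Sum.inl 0)
/-- The variable `b` of `S(P)`. -/
def pb : MvPolynomial (VarsP n) K := X (Sum.inl 1)
/-- The variable `c` of `S(P)`. -/
def pc : MvPolynomial (VarsP n) K := X (Sum.inl 2)
/-- The variable `d` of `S(P)`. -/
def pd : MvPolynomial (VarsP n) K := X (Sum.inl 3)
/-- The variable `xᵢ` of `S(P)` (indices `0, …, n-1` corresponding to `x₁, …, xₙ`). -/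
def px (i : Fin n) : MvPolynomial (VarsP n) K := X (Sum.inr (Sum.inl i))
/-- The variable `yᵢ` of `S(P)` (indices `0, …, n-2` corresponding to `y₁, …, y_{n-1}`). -/
def py (i : Fin (n - 1)) : MvPolynomial (VarsP n) K := X (Sum.inr (Sum.inr i))

/-- The variable `xₙ` of `S(P)`. -/
def pxn (hn : 1 ≤ n) : MvPolynomial (VarsP n) K := px K n ⟨n - 1, by omega⟩

/-- The monomial ideal `I(P)` of `S(P)`, generated by
`a⁶, a⁵b, ab⁵, b⁶, a⁴b⁴c, a⁴b⁴d`, by `a⁴xᵢyᵢ², b⁴xᵢ²yᵢ` for `i = 1, …, n-1`,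
and by `a⁴xₙ, b⁴xₙ²`. -/
def idealIP (hn : 1 ≤ n) : Ideal (MvPolynomial (VarsP n) K) :=
  Ideal.span
    ({pa K n ^ 6, pa K n ^ 5 * pb K n, pa K n * pb K n ^ 5, pb K n ^ 6,
      pa K n ^ 4 * pb K n ^ 4 * pc K n, pa K n ^ 4 * pb K n ^ 4 * pd K n,
      pa K n ^ 4 * pxn K n hn, pb K n ^ 4 * pxn K n hn ^ 2} ∪
     Set.range (fun i : Fin (n - 1) =>
       pa K n ^ 4 * px K n (Fin.castLE (Nat.sub_le n 1) i) * py K n i ^ 2) ∪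
     Set.range (fun i : Fin (n - 1) =>
       pb K n ^ 4 * px K n (Fin.castLE (Nat.sub_le n 1) i) ^ 2 * py K n i))

/-- The graded maximal ideal `m(P)` of `S(P)`. -/
def mMaxP : Ideal (MvPolynomial (VarsP n) K) := Ideal.span (Set.range X)

/-- The monomial
`u' = a⁸b⁴ ⬝ (a⁴x₁y₁²)(b⁴x₁²y₁) ⋯ (a⁴x_{t-1}y_{t-1}²)(b⁴x_{t-1}²y_{t-1}) ⬝
x_t y_t ⋯ x_{n-1} y_{n-1} ⬝ xₙ` of `S(P)`. -/
def uP (hn : 1 ≤ n) (t : ℕ) : MvPolynomial (VarsP n) K :=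
  pa K n ^ 8 * pb K n ^ 4 *
    (∏ i : Fin (n - 1),
      if (i : ℕ) < t - 1 then
        (pa K n ^ 4 * px K n (Fin.castLE (Nat.sub_le n 1) i) * py K n i ^ 2) *
          (pb K n ^ 4 * px K n (Fin.castLE (Nat.sub_le n 1) i) ^ 2 * py K n i)
      else px K n (Fin.castLE (Nat.sub_le n 1) i) * py K n i) *
    pxn K n hn

lemma prodMemPow {R : Type*} [CommRing R] (I : Ideal R) {ι : Type*} (s : Finset ι)
    (f : ι → R) (e : ι → ℕ) (h : ∀ i ∈ s, f i ∈ I ^ e i) :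
    (∏ i ∈ s, f i) ∈ I ^ (∑ i ∈ s, e i) := by
  classical
  induction s using Finset.induction with
  | empty => simp
  | @insert a s ha ih =>
    rw [Finset.prod_insert ha, Finset.sum_insert ha, pow_add]
    exact Ideal.mul_mem_mul (h _ (Finset.mem_insert_self _ _))
      (ih fun i hi => h i (Finset.mem_insert_of_mem hi))

lemma sumIteLt (m s c : ℕ) :
    ∑ i ∈ Finset.range m, (if i < s then c else 0) = c * min s m := by
  induction m with
  | zero => simp
  | succ m ih =>
    rw [Finset.sum_range_succ, ih]
    rcases lt_or_ge m s with h | h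
    · rw [if_pos h, show s ⊓ m = m by omega, show s ⊓ (m+1) = m+1 by omega]; ring
    · rw [if_neg (by omega), show s ⊓ m = s by omega, show s ⊓ (m+1) = s by omega, add_zero]

lemma prodMonomial {K : Type*} [CommSemiring K] {σ ι : Type*} (s : Finset ι)
    (f : ι → (σ →₀ ℕ)) :
    ∏ i ∈ s, (monomial (f i) (1 : K)) = monomial (∑ i ∈ s, f i) 1 := by
  classical
  induction s using Finset.induction with
  | empty => simp
  | @insert a s ha ih =>
    rw [Finset.prod_insert ha, Finset.sum_insert ha, ih, monomial_mul, one_mul]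

lemma spanMonomialPow {K : Type*} [CommSemiring K] {σ A : Type*} (E : A → (σ →₀ ℕ)) (k : ℕ) :
    (Ideal.span ((fun s => monomial s (1 : K)) '' Set.range E)) ^ k =
    Ideal.span ((fun s => monomial s (1 : K)) ''
      {s | ∃ f : Fin k → A, s = ∑ i, E (f i)}) := by
  induction k with
  | zero =>
    rw [pow_zero]
    have h0 : {s : σ →₀ ℕ | ∃ f : Fin 0 → A, s = ∑ i, E (f i)} = {0} := by
      ext s
      constructor
      · rintro ⟨f, rfl⟩; simp
      · rintro rfl; exact ⟨Fin.elim0, by simp⟩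
    rw [h0]
    simp [Ideal.span_singleton_one, Ideal.one_eq_top]
  | succ k ih =>
    rw [pow_succ, ih, Ideal.span_mul_span']
    congr 1
    ext p
    constructor
    · rw [Set.mem_mul]
      rintro ⟨x, ⟨sx, ⟨f, rfl⟩, rfl⟩, y, ⟨sy, ⟨a, rfl⟩, rfl⟩, rfl⟩
      refine ⟨_, ⟨Fin.snoc f a, rfl⟩, ?_⟩
      simp only [monomial_mul, one_mul]
      congr 1
      rw [Fin.sum_univ_castSucc]
      simp [Fin.snoc_castSucc, Fin.snoc_last]
    · rintro ⟨s, ⟨f, rfl⟩, rfl⟩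
      rw [Set.mem_mul]
      refine ⟨monomial (∑ i : Fin k, E (f i.castSucc)) 1,
        ⟨_, ⟨fun i => f i.castSucc, rfl⟩, rfl⟩,
        monomial (E (f (Fin.last k))) 1, ⟨_, ⟨f (Fin.last k), rfl⟩, rfl⟩, ?_⟩
      simp only [monomial_mul, one_mul]
      congr 1
      rw [Fin.sum_univ_castSucc]
section ExpSetup

/-- short names for the variables -/
abbrev va : VarsP n := Sum.inl 0
abbrev vb : VarsP n := Sum.inl 1
abbrev vc : VarsP n := Sum.inl 2
abbrev vd : VarsP n := Sum.inl 3
abbrev vx (j : Fin (n-1)) : VarsP n := Sum.inr (Sum.inl (Fin.castLE (Nat.sub_le n 1) j))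
abbrev vy (j : Fin (n-1)) : VarsP n := Sum.inr (Sum.inr j)
def vxn (hn : 1 ≤ n) : VarsP n := Sum.inr (Sum.inl ⟨n-1, by omega⟩)

def eA (j : Fin (n-1)) : VarsP n →₀ ℕ :=
  Finsupp.single (va n) 4 + Finsupp.single (vx n j) 1 + Finsupp.single (vy n j) 2
def eB (j : Fin (n-1)) : VarsP n →₀ ℕ :=
  Finsupp.single (vb n) 4 + Finsupp.single (vx n j) 2 + Finsupp.single (vy n j) 1
def e8 (hn : 1 ≤ n) (k : Fin 8) : VarsP n →₀ ℕ :=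
  match (k : ℕ) with
  | 0 => Finsupp.single (va n) 6
  | 1 => Finsupp.single (va n) 5 + Finsupp.single (vb n) 1
  | 2 => Finsupp.single (va n) 1 + Finsupp.single (vb n) 5
  | 3 => Finsupp.single (vb n) 6
  | 4 => Finsupp.single (va n) 4 + Finsupp.single (vb n) 4 + Finsupp.single (vc n) 1
  | 5 => Finsupp.single (va n) 4 + Finsupp.single (vb n) 4 + Finsupp.single (vd n) 1
  | 6 => Finsupp.single (va n) 4 + Finsupp.single (vxn n hn) 1
  | _ => Finsupp.single (vb n) 4 + Finsupp.single (vxn n hn) 2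

abbrev GIdx : Type := Fin 8 ⊕ Fin (n-1) ⊕ Fin (n-1)

def Ex (hn : 1 ≤ n) : GIdx n → (VarsP n →₀ ℕ) :=
  Sum.elim (e8 n hn) (Sum.elim (eA n) (eB n))

def isA : GIdx n → ℕ := fun g => match g with | .inr (.inl _) => 1 | _ => 0
def isB : GIdx n → ℕ := fun g => match g with | .inr (.inr _) => 1 | _ => 0

variable {n}

lemma vx_ne_vxn (hn : 1 ≤ n) (j : Fin (n-1)) : vx n j ≠ vxn n hn := by
  simp only [vx, vxn, ne_eq, Sum.inr.injEq, Sum.inl.injEq, Fin.ext_iff, Fin.coe_castLE]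
  omega

lemma Ex_apply_c (hn : 1 ≤ n) (g : GIdx n) :
    Ex n hn g (vc n) = if g = .inl 4 then 1 else 0 := by
  rcases g with k | j | j
  · fin_cases k <;> simp [Ex, e8, vxn, Finsupp.single_apply]
  · simp [Ex, eA, Finsupp.single_apply]
  · simp [Ex, eB, Finsupp.single_apply]

lemma Ex_apply_d (hn : 1 ≤ n) (g : GIdx n) :
    Ex n hn g (vd n) = if g = .inl 5 then 1 else 0 := by
  rcases g with k | j | j
  · fin_cases k <;> simp [Ex, e8, vxn, Finsupp.single_apply]
  · simp [Ex, eA, Finsupp.single_apply]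
  · simp [Ex, eB, Finsupp.single_apply]

lemma Ex_apply_xn (hn : 1 ≤ n) (g : GIdx n) :
    Ex n hn g (vxn n hn) = if g = .inl 6 then 1 else if g = .inl 7 then 2 else 0 := by
  rcases g with k | j | j
  · fin_cases k <;> simp [Ex, e8, vxn, Finsupp.single_apply]
  · simp [Ex, eA, vxn, Finsupp.single_apply, vx_ne_vxn hn j, Fin.ext_iff]
    omega
  · simp [Ex, eB, vxn, Finsupp.single_apply, vx_ne_vxn hn j, Fin.ext_iff]
    omega

lemma Ex_apply_x (hn : 1 ≤ n) (g : GIdx n) (j : Fin (n-1)) :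
    Ex n hn g (vx n j) = if g = .inr (.inl j) then 1 else if g = .inr (.inr j) then 2 else 0 := by
  rcases g with k | j' | j'
  · fin_cases k <;>
      simp [Ex, e8, vxn, Finsupp.single_apply, Fin.ext_iff] <;> omega
  · by_cases h : j' = j <;> simp [Ex, eA, Finsupp.single_apply, h, Fin.castLE_inj]
  · by_cases h : j' = j <;> simp [Ex, eB, Finsupp.single_apply, h, Fin.castLE_inj]

lemma Ex_apply_y (hn : 1 ≤ n) (g : GIdx n) (j : Fin (n-1)) :
    Ex n hn g (vy n j) = if g = .inr (.inl j) then 2 else if g = .inr (.inr j) then 1 else 0 := by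
  rcases g with k | j' | j'
  · fin_cases k <;> simp [Ex, e8, vxn, Finsupp.single_apply]
  · by_cases h : j' = j <;> simp [Ex, eA, Finsupp.single_apply, h]
  · by_cases h : j' = j <;> simp [Ex, eB, Finsupp.single_apply, h]

lemma Ex_apply_a (hn : 1 ≤ n) (g : GIdx n) :
    Ex n hn g (va n) =
      6 * (if g = .inl 0 then 1 else 0) + 5 * (if g = .inl 1 then 1 else 0) +
      (if g = .inl 2 then 1 else 0) + 4 * (if g = .inl 4 then 1 else 0) +
      4 * (if g = .inl 5 then 1 else 0) + 4 * (if g = .inl 6 then 1 else 0) +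
      4 * isA n g := by
  rcases g with k | j | j
  · fin_cases k <;> simp [Ex, e8, vxn, isA, Finsupp.single_apply]
  · simp [Ex, eA, isA, Finsupp.single_apply]
  · simp [Ex, eB, isA, Finsupp.single_apply]

lemma Ex_apply_b (hn : 1 ≤ n) (g : GIdx n) :
    Ex n hn g (vb n) =
      (if g = .inl 1 then 1 else 0) + 5 * (if g = .inl 2 then 1 else 0) +
      6 * (if g = .inl 3 then 1 else 0) + 4 * (if g = .inl 4 then 1 else 0) +
      4 * (if g = .inl 5 then 1 else 0) + 4 * (if g = .inl 7 then 1 else 0) +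
      4 * isB n g := by
  rcases g with k | j | j
  · fin_cases k <;> simp [Ex, e8, vxn, isB, Finsupp.single_apply]
  · simp [Ex, eA, isB, Finsupp.single_apply]
  · simp [Ex, eB, isB, Finsupp.single_apply]

lemma one_eq_cnt (g : GIdx n) :
    1 = (if g = .inl 0 then 1 else 0) + (if g = .inl 1 then 1 else 0) +
      (if g = .inl 2 then 1 else 0) + (if g = .inl 3 then 1 else 0) +
      (if g = .inl 4 then 1 else 0) + (if g = .inl 5 then 1 else 0) +
      (if g = .inl 6 then 1 else 0) + (if g = .inl 7 then 1 else 0) +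
      isA n g + isB n g := by
  rcases g with k | j | j
  · fin_cases k <;> simp [isA, isB]
  · simp [isA, isB]
  · simp [isA, isB]

lemma isA_eq_sum (g : GIdx n) :
    isA n g = ∑ j : Fin (n-1), (if g = .inr (.inl j) then 1 else 0) := by
  rcases g with k | j | j <;> simp [isA, Finset.sum_ite_eq']

lemma isB_eq_sum (g : GIdx n) :
    isB n g = ∑ j : Fin (n-1), (if g = .inr (.inr j) then 1 else 0) := by
  rcases g with k | j | j <;> simp [isB, Finset.sum_ite_eq']
def Usp (hn : 1 ≤ n) (t : ℕ) : VarsP n →₀ ℕ :=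
  Finsupp.single (va n) 8 + Finsupp.single (vb n) 4 +
    (∑ j : Fin (n-1), if (j : ℕ) < t - 1 then eA n j + eB n j
      else Finsupp.single (vx n j) 1 + Finsupp.single (vy n j) 1) +
    Finsupp.single (vxn n hn) 1

variable {K}

lemma uP_eq_monomial (hn : 1 ≤ n) (t : ℕ) :
    uP K n hn t = monomial (Usp hn t) 1 := by
  have hfac : ∀ j ∈ (Finset.univ : Finset (Fin (n-1))), (if (j : ℕ) < t - 1 then
        (pa K n ^ 4 * px K n (Fin.castLE (Nat.sub_le n 1) j) * py K n j ^ 2) *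
          (pb K n ^ 4 * px K n (Fin.castLE (Nat.sub_le n 1) j) ^ 2 * py K n j)
      else px K n (Fin.castLE (Nat.sub_le n 1) j) * py K n j) =
      monomial (if (j : ℕ) < t - 1 then eA n j + eB n j
        else Finsupp.single (vx n j) 1 + Finsupp.single (vy n j) 1) (1 : K) := by
    intro j _
    split_ifs with h
    · simp only [pa, pb, px, py, eA, eB, X, monomial_pow, monomial_mul,
        Finsupp.smul_single, smul_eq_mul, mul_one, one_pow, one_mul]
    · simp only [px, py, X, monomial_mul, one_mul]
  rw [uP, Finset.prod_congr rfl hfac, prodMonomial, Usp]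
  simp only [pa, pb, pxn, px, vxn, X, monomial_pow, monomial_mul,
    Finsupp.smul_single, smul_eq_mul, mul_one, one_pow, one_mul]
lemma Usp_apply_a (hn : 1 ≤ n) {t : ℕ} (ht2 : t ≤ n) :
    Usp hn t (va n) = 8 + 4 * (t - 1) := by
  have hterm : ∀ j ∈ (Finset.univ : Finset (Fin (n-1))),
      ((if (j : ℕ) < t - 1 then eA n j + eB n j
        else Finsupp.single (vx n j) 1 + Finsupp.single (vy n j) 1) : VarsP n →₀ ℕ) (va n) =
      (if (j : ℕ) < t - 1 then 4 else 0) := by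
    intro j _
    split_ifs with h
    · simp [eA, eB, Finsupp.single_apply]
    · simp [Finsupp.single_apply]
  rw [Usp]
  simp only [Finsupp.add_apply, Finsupp.finset_sum_apply]
  rw [Finset.sum_congr rfl hterm, Fin.sum_univ_eq_sum_range (fun j => if j < t - 1 then 4 else 0),
    sumIteLt]
  simp [vxn, Finsupp.single_apply]
  omega

lemma Usp_apply_b (hn : 1 ≤ n) {t : ℕ} (ht2 : t ≤ n) :
    Usp hn t (vb n) = 4 + 4 * (t - 1) := by
  have hterm : ∀ j ∈ (Finset.univ : Finset (Fin (n-1))),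
      ((if (j : ℕ) < t - 1 then eA n j + eB n j
        else Finsupp.single (vx n j) 1 + Finsupp.single (vy n j) 1) : VarsP n →₀ ℕ) (vb n) =
      (if (j : ℕ) < t - 1 then 4 else 0) := by
    intro j _
    split_ifs with h
    · simp [eA, eB, Finsupp.single_apply]
    · simp [Finsupp.single_apply]
  rw [Usp]
  simp only [Finsupp.add_apply, Finsupp.finset_sum_apply]
  rw [Finset.sum_congr rfl hterm, Fin.sum_univ_eq_sum_range (fun j => if j < t - 1 then 4 else 0),
    sumIteLt]
  simp [vxn, Finsupp.single_apply]
  omega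

lemma Usp_apply_c (hn : 1 ≤ n) (t : ℕ) : Usp hn t (vc n) = 0 := by
  have hterm : ∀ j ∈ (Finset.univ : Finset (Fin (n-1))),
      ((if (j : ℕ) < t - 1 then eA n j + eB n j
        else Finsupp.single (vx n j) 1 + Finsupp.single (vy n j) 1) : VarsP n →₀ ℕ) (vc n) =
      0 := by
    intro j _; split_ifs <;> simp [eA, eB, Finsupp.single_apply]
  rw [Usp]
  simp only [Finsupp.add_apply, Finsupp.finset_sum_apply]
  rw [Finset.sum_congr rfl hterm]
  simp [vxn, Finsupp.single_apply]

lemma Usp_apply_d (hn : 1 ≤ n) (t : ℕ) : Usp hn t (vd n) = 0 := by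
  have hterm : ∀ j ∈ (Finset.univ : Finset (Fin (n-1))),
      ((if (j : ℕ) < t - 1 then eA n j + eB n j
        else Finsupp.single (vx n j) 1 + Finsupp.single (vy n j) 1) : VarsP n →₀ ℕ) (vd n) =
      0 := by
    intro j _; split_ifs <;> simp [eA, eB, Finsupp.single_apply]
  rw [Usp]
  simp only [Finsupp.add_apply, Finsupp.finset_sum_apply]
  rw [Finset.sum_congr rfl hterm]
  simp [vxn, Finsupp.single_apply]

lemma Usp_apply_xn (hn : 1 ≤ n) (t : ℕ) : Usp hn t (vxn n hn) = 1 := by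
  have hterm : ∀ j ∈ (Finset.univ : Finset (Fin (n-1))),
      ((if (j : ℕ) < t - 1 then eA n j + eB n j
        else Finsupp.single (vx n j) 1 + Finsupp.single (vy n j) 1) : VarsP n →₀ ℕ) (vxn n hn) =
      0 := by
    intro j _
    split_ifs <;>
      simp [eA, eB, vxn, Finsupp.single_apply, Fin.ext_iff] <;> omega
  rw [Usp]
  simp only [Finsupp.add_apply, Finsupp.finset_sum_apply]
  rw [Finset.sum_congr rfl hterm]
  simp [vxn, Finsupp.single_apply, Fin.ext_iff]

lemma Usp_apply_x (hn : 1 ≤ n) (t : ℕ) (j : Fin (n-1)) :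
    Usp hn t (vx n j) = if (j : ℕ) < t - 1 then 3 else 1 := by
  have hterm : ∀ j' ∈ (Finset.univ : Finset (Fin (n-1))),
      ((if (j' : ℕ) < t - 1 then eA n j' + eB n j'
        else Finsupp.single (vx n j') 1 + Finsupp.single (vy n j') 1) : VarsP n →₀ ℕ) (vx n j) =
      (if j' = j then (if (j : ℕ) < t - 1 then 3 else 1) else 0) := by
    intro j' _
    by_cases h : j' = j
    · subst h
      split_ifs <;> simp_all [eA, eB, Finsupp.single_apply]
    · split_ifs <;> simp_all [eA, eB, Finsupp.single_apply, Fin.castLE_inj]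
  rw [Usp]
  simp only [Finsupp.add_apply, Finsupp.finset_sum_apply]
  rw [Finset.sum_congr rfl hterm, Finset.sum_ite_eq' Finset.univ j]
  simp [vxn, Finsupp.single_apply, Fin.ext_iff]
  omega

lemma Usp_apply_y (hn : 1 ≤ n) (t : ℕ) (j : Fin (n-1)) :
    Usp hn t (vy n j) = if (j : ℕ) < t - 1 then 3 else 1 := by
  have hterm : ∀ j' ∈ (Finset.univ : Finset (Fin (n-1))),
      ((if (j' : ℕ) < t - 1 then eA n j' + eB n j'
        else Finsupp.single (vx n j') 1 + Finsupp.single (vy n j') 1) : VarsP n →₀ ℕ) (vy n j) =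
      (if j' = j then (if (j : ℕ) < t - 1 then 3 else 1) else 0) := by
    intro j' _
    by_cases h : j' = j
    · subst h
      split_ifs <;> simp_all [eA, eB, Finsupp.single_apply]
    · split_ifs <;> simp_all [eA, eB, Finsupp.single_apply]
  rw [Usp]
  simp only [Finsupp.add_apply, Finsupp.finset_sum_apply]
  rw [Finset.sum_congr rfl hterm, Finset.sum_ite_eq' Finset.univ j]
  simp [vxn, Finsupp.single_apply]
lemma idealIP_le_span (hn : 1 ≤ n) :
    idealIP K n hn ≤ Ideal.span ((fun s => monomial s (1 : K)) '' Set.range (Ex n hn)) := by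
  rw [idealIP, Ideal.span_le]
  intro q hq
  apply Ideal.subset_span
  simp only [Set.mem_union, Set.mem_insert_iff, Set.mem_singleton_iff, Set.mem_range] at hq
  have conv : ∀ g : GIdx n, monomial (Ex n hn g) (1 : K) ∈
      (fun s => monomial s (1 : K)) '' Set.range (Ex n hn) :=
    fun g => ⟨Ex n hn g, ⟨g, rfl⟩, rfl⟩
  rcases hq with ((h|h|h|h|h|h|h|h) | ⟨j, h⟩) | ⟨j, h⟩ <;> subst h
  · convert conv (.inl 0) using 1
    simp only [pa, Ex, Sum.elim_inl, e8, X_pow_eq_monomial]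
    rfl
  · convert conv (.inl 1) using 1
    simp only [pa, pb, Ex, Sum.elim_inl, e8, X, monomial_pow, monomial_mul, Finsupp.smul_single, smul_eq_mul, mul_one, one_pow, one_mul]
    rfl
  · convert conv (.inl 2) using 1
    simp only [pa, pb, Ex, Sum.elim_inl, e8, X, monomial_pow, monomial_mul, Finsupp.smul_single, smul_eq_mul, mul_one, one_pow, one_mul]
    rfl
  · convert conv (.inl 3) using 1
    simp only [pb, Ex, Sum.elim_inl, e8, X_pow_eq_monomial]
    rfl
  · convert conv (.inl 4) using 1
    simp only [pa, pb, pc, Ex, Sum.elim_inl, e8, X, monomial_pow, monomial_mul, Finsupp.smul_single, smul_eq_mul, mul_one, one_pow, one_mul]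
    rfl
  · convert conv (.inl 5) using 1
    simp only [pa, pb, pd, Ex, Sum.elim_inl, e8, X, monomial_pow, monomial_mul, Finsupp.smul_single, smul_eq_mul, mul_one, one_pow, one_mul]
    rfl
  · convert conv (.inl 6) using 1
    simp only [pa, pxn, px, vxn, Ex, Sum.elim_inl, e8, X, monomial_pow, monomial_mul, Finsupp.smul_single, smul_eq_mul, mul_one, one_pow, one_mul]
    rfl
  · convert conv (.inl 7) using 1
    simp only [pb, pxn, px, vxn, Ex, Sum.elim_inl, e8, X, monomial_pow, monomial_mul, Finsupp.smul_single, smul_eq_mul, mul_one, one_pow, one_mul]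
  · convert conv (.inr (.inl j)) using 1
    simp only [pa, px, py, Ex, Sum.elim_inr, Sum.elim_inl, eA, X, monomial_pow, monomial_mul,
      Finsupp.smul_single, smul_eq_mul, mul_one, one_pow, one_mul]
  · convert conv (.inr (.inr j)) using 1
    simp only [pb, px, py, Ex, Sum.elim_inr, eB, X, monomial_pow, monomial_mul,
      Finsupp.smul_single, smul_eq_mul, mul_one, one_pow, one_mul]
lemma ite2_split {P Q : Prop} [Decidable P] [Decidable Q] (h : P → Q → False) (a b : ℕ) :
    (if P then a else if Q then b else 0) =
      a * (if P then 1 else 0) + b * (if Q then 1 else 0) := by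
  by_cases hP : P
  · have hQ : ¬Q := fun hq => h hP hq
    simp [hP, hQ]
  · by_cases hQ : Q <;> simp [hP, hQ]

lemma countingFalse {t q0 q1 q2 q3 q4 q5 q6 q7 A B : ℕ} (ht1 : 1 ≤ t)
    (hc : q4 ≤ 0) (hd : q5 ≤ 0) (hxn : q6 + 2*q7 ≤ 1) (hA : A ≤ t-1) (hB : B ≤ t-1)
    (ha : 6*q0+5*q1+q2+4*q4+4*q5+4*q6+4*A ≤ 8+4*(t-1))
    (hb : q1+5*q2+6*q3+4*q4+4*q5+4*q7+4*B ≤ 4+4*(t-1))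
    (htot : q0+q1+q2+q3+q4+q5+q6+q7+A+B = 2*t) : False := by
  have hp : q0+q1+q2+q3 ≤ 2 := by omega
  have h0 : q0 ≤ 2 := by omega
  have h1 : q1 ≤ 2 := by omega
  have h2 : q2 ≤ 2 := by omega
  have h3 : q3 ≤ 2 := by omega
  interval_cases q0 <;> interval_cases q1 <;> interval_cases q2 <;> interval_cases q3 <;> omega

lemma uP_not_mem_pow (hn : 1 ≤ n) {t : ℕ} (ht1 : 1 ≤ t) (ht2 : t ≤ n) :
    uP K n hn t ∉ (idealIP K n hn) ^ (2 * t) := by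
  classical
  intro hmem
  have h1 : uP K n hn t ∈
      (Ideal.span ((fun s => monomial s (1 : K)) '' Set.range (Ex n hn))) ^ (2 * t) :=
    Ideal.pow_right_mono (idealIP_le_span hn) (2 * t) hmem
  rw [spanMonomialPow, uP_eq_monomial hn t, mem_ideal_span_monomial_image] at h1
  have h2 := h1 (Usp hn t) (by
    rw [support_monomial, if_neg (one_ne_zero : (1 : K) ≠ 0)]
    exact Finset.mem_singleton_self _)
  obtain ⟨s, ⟨f, rfl⟩, hle⟩ := h2
  -- pointwise inequality at each variable
  have happ : ∀ v : VarsP n, (∑ i : Fin (2 * t), Ex n hn (f i) v) ≤ Usp hn t v := by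
    intro v
    rw [← Finsupp.finset_sum_apply]
    exact hle v
  -- constraint at c : no generator of type inl 4
  have hc : (∑ i : Fin (2 * t), if f i = Sum.inl 4 then 1 else 0) ≤ 0 := by
    calc (∑ i : Fin (2 * t), if f i = Sum.inl 4 then 1 else 0)
        = ∑ i : Fin (2 * t), Ex n hn (f i) (vc n) :=
          Finset.sum_congr rfl (fun i _ => (Ex_apply_c hn (f i)).symm)
      _ ≤ Usp hn t (vc n) := happ _
      _ = 0 := Usp_apply_c hn t
  have hd : (∑ i : Fin (2 * t), if f i = Sum.inl 5 then 1 else 0) ≤ 0 := by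
    calc (∑ i : Fin (2 * t), if f i = Sum.inl 5 then 1 else 0)
        = ∑ i : Fin (2 * t), Ex n hn (f i) (vd n) :=
          Finset.sum_congr rfl (fun i _ => (Ex_apply_d hn (f i)).symm)
      _ ≤ Usp hn t (vd n) := happ _
      _ = 0 := Usp_apply_d hn t
  -- constraint at xₙ
  have hxn : (∑ i : Fin (2 * t), if f i = Sum.inl 6 then 1 else 0) +
      2 * (∑ i : Fin (2 * t), if f i = Sum.inl 7 then 1 else 0) ≤ 1 := by
    calc (∑ i : Fin (2 * t), if f i = Sum.inl 6 then 1 else 0) +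
        2 * (∑ i : Fin (2 * t), if f i = Sum.inl 7 then 1 else 0)
        = ∑ i : Fin (2 * t), Ex n hn (f i) (vxn n hn) := by
          rw [Finset.mul_sum, ← Finset.sum_add_distrib]
          refine Finset.sum_congr rfl (fun i _ => ?_)
          rw [Ex_apply_xn hn (f i), ite2_split (by intro hh1 hh2; rw [hh1] at hh2; simp at hh2) 1 2]
          ring
      _ ≤ Usp hn t (vxn n hn) := happ _
      _ = 1 := Usp_apply_xn hn t
  -- per-index constraints
  have hAB : ∀ j : Fin (n - 1),
      (∑ i : Fin (2 * t), if f i = Sum.inr (Sum.inl j) then 1 else 0) ≤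
        (if (j : ℕ) < t - 1 then 1 else 0) ∧
      (∑ i : Fin (2 * t), if f i = Sum.inr (Sum.inr j) then 1 else 0) ≤
        (if (j : ℕ) < t - 1 then 1 else 0) := by
    intro j
    have hx : (∑ i : Fin (2 * t), if f i = Sum.inr (Sum.inl j) then 1 else 0) +
        2 * (∑ i : Fin (2 * t), if f i = Sum.inr (Sum.inr j) then 1 else 0) ≤
        (if (j : ℕ) < t - 1 then 3 else 1) := by
      calc _ = ∑ i : Fin (2 * t), Ex n hn (f i) (vx n j) := by
            rw [Finset.mul_sum, ← Finset.sum_add_distrib]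
            refine Finset.sum_congr rfl (fun i _ => ?_)
            rw [Ex_apply_x hn (f i) j, ite2_split (by intro hh1 hh2; rw [hh1] at hh2; simp at hh2) 1 2]
            ring
        _ ≤ Usp hn t (vx n j) := happ _
        _ = _ := Usp_apply_x hn t j
    have hy : 2 * (∑ i : Fin (2 * t), if f i = Sum.inr (Sum.inl j) then 1 else 0) +
        (∑ i : Fin (2 * t), if f i = Sum.inr (Sum.inr j) then 1 else 0) ≤
        (if (j : ℕ) < t - 1 then 3 else 1) := by
      calc _ = ∑ i : Fin (2 * t), Ex n hn (f i) (vy n j) := by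
            rw [Finset.mul_sum, ← Finset.sum_add_distrib]
            refine Finset.sum_congr rfl (fun i _ => ?_)
            rw [Ex_apply_y hn (f i) j, ite2_split (by intro hh1 hh2; rw [hh1] at hh2; simp at hh2) 2 1]
            ring
        _ ≤ Usp hn t (vy n j) := happ _
        _ = _ := Usp_apply_y hn t j
    split_ifs at hx hy ⊢ <;> omega
  -- global A and B bounds
  have hA : (∑ i : Fin (2 * t), isA n (f i)) ≤ t - 1 := by
    have h1 : (∑ i : Fin (2 * t), isA n (f i)) =
        ∑ j : Fin (n - 1), ∑ i : Fin (2 * t), (if f i = Sum.inr (Sum.inl j) then 1 else 0) := by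
      rw [Finset.sum_comm]
      exact Finset.sum_congr rfl (fun i _ => isA_eq_sum (f i))
    rw [h1]
    calc _ ≤ ∑ j : Fin (n - 1), (if (j : ℕ) < t - 1 then 1 else 0) :=
          Finset.sum_le_sum (fun j _ => (hAB j).1)
      _ = 1 * min (t - 1) (n - 1) := by
          rw [Fin.sum_univ_eq_sum_range (fun j => if j < t - 1 then 1 else 0), sumIteLt]
      _ ≤ t - 1 := by omega
  have hB : (∑ i : Fin (2 * t), isB n (f i)) ≤ t - 1 := by
    have h1 : (∑ i : Fin (2 * t), isB n (f i)) =
        ∑ j : Fin (n - 1), ∑ i : Fin (2 * t), (if f i = Sum.inr (Sum.inr j) then 1 else 0) := by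
      rw [Finset.sum_comm]
      exact Finset.sum_congr rfl (fun i _ => isB_eq_sum (f i))
    rw [h1]
    calc _ ≤ ∑ j : Fin (n - 1), (if (j : ℕ) < t - 1 then 1 else 0) :=
          Finset.sum_le_sum (fun j _ => (hAB j).2)
      _ = 1 * min (t - 1) (n - 1) := by
          rw [Fin.sum_univ_eq_sum_range (fun j => if j < t - 1 then 1 else 0), sumIteLt]
      _ ≤ t - 1 := by omega
  -- degree constraint at a
  have ha : 6 * (∑ i : Fin (2 * t), if f i = Sum.inl 0 then 1 else 0) +
      5 * (∑ i : Fin (2 * t), if f i = Sum.inl 1 then 1 else 0) +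
      (∑ i : Fin (2 * t), if f i = Sum.inl 2 then 1 else 0) +
      4 * (∑ i : Fin (2 * t), if f i = Sum.inl 4 then 1 else 0) +
      4 * (∑ i : Fin (2 * t), if f i = Sum.inl 5 then 1 else 0) +
      4 * (∑ i : Fin (2 * t), if f i = Sum.inl 6 then 1 else 0) +
      4 * (∑ i : Fin (2 * t), isA n (f i)) ≤ 8 + 4 * (t - 1) := by
    calc _ = ∑ i : Fin (2 * t), Ex n hn (f i) (va n) := by
          simp only [Finset.mul_sum, ← Finset.sum_add_distrib]
          exact Finset.sum_congr rfl (fun i _ => (Ex_apply_a hn (f i)).symm)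
      _ ≤ Usp hn t (va n) := happ _
      _ = _ := Usp_apply_a hn ht2
  have hb : (∑ i : Fin (2 * t), if f i = Sum.inl 1 then 1 else 0) +
      5 * (∑ i : Fin (2 * t), if f i = Sum.inl 2 then 1 else 0) +
      6 * (∑ i : Fin (2 * t), if f i = Sum.inl 3 then 1 else 0) +
      4 * (∑ i : Fin (2 * t), if f i = Sum.inl 4 then 1 else 0) +
      4 * (∑ i : Fin (2 * t), if f i = Sum.inl 5 then 1 else 0) +
      4 * (∑ i : Fin (2 * t), if f i = Sum.inl 7 then 1 else 0) +
      4 * (∑ i : Fin (2 * t), isB n (f i)) ≤ 4 + 4 * (t - 1) := by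
    calc _ = ∑ i : Fin (2 * t), Ex n hn (f i) (vb n) := by
          simp only [Finset.mul_sum, ← Finset.sum_add_distrib]
          exact Finset.sum_congr rfl (fun i _ => (Ex_apply_b hn (f i)).symm)
      _ ≤ Usp hn t (vb n) := happ _
      _ = _ := Usp_apply_b hn ht2
  -- total count
  have htot : (∑ i : Fin (2 * t), if f i = Sum.inl 0 then 1 else 0) +
      (∑ i : Fin (2 * t), if f i = Sum.inl 1 then 1 else 0) +
      (∑ i : Fin (2 * t), if f i = Sum.inl 2 then 1 else 0) +
      (∑ i : Fin (2 * t), if f i = Sum.inl 3 then 1 else 0) +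
      (∑ i : Fin (2 * t), if f i = Sum.inl 4 then 1 else 0) +
      (∑ i : Fin (2 * t), if f i = Sum.inl 5 then 1 else 0) +
      (∑ i : Fin (2 * t), if f i = Sum.inl 6 then 1 else 0) +
      (∑ i : Fin (2 * t), if f i = Sum.inl 7 then 1 else 0) +
      (∑ i : Fin (2 * t), isA n (f i)) + (∑ i : Fin (2 * t), isB n (f i)) = 2 * t := by
    have : ∀ i ∈ (Finset.univ : Finset (Fin (2 * t))), (1 : ℕ) =
        (if f i = Sum.inl 0 then 1 else 0) + (if f i = Sum.inl 1 then 1 else 0) +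
        (if f i = Sum.inl 2 then 1 else 0) + (if f i = Sum.inl 3 then 1 else 0) +
        (if f i = Sum.inl 4 then 1 else 0) + (if f i = Sum.inl 5 then 1 else 0) +
        (if f i = Sum.inl 6 then 1 else 0) + (if f i = Sum.inl 7 then 1 else 0) +
        isA n (f i) + isB n (f i) := fun i _ => one_eq_cnt (f i)
    simp only [← Finset.sum_add_distrib]
    rw [← Finset.sum_congr rfl this]
    simp
  exact countingFalse ht1 hc hd hxn hA hB ha hb htot
lemma mem_pow_two_mul {R : Type*} [CommRing R] {I : Ideal R} {x y q : R} {m k : ℕ}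
    (hk : k = 2 + m) (hx : x ∈ I) (hy : y ∈ I) (hq : q ∈ I ^ m) : x * y * q ∈ I ^ k := by
  subst hk
  rw [pow_add, pow_two]
  exact Ideal.mul_mem_mul (Ideal.mul_mem_mul hx hy) hq

lemma mem_pow_four_mul {R : Type*} [CommRing R] {I : Ideal R} {x y z w q : R} {m k : ℕ}
    (hk : k = 4 + m) (hx : x ∈ I) (hy : y ∈ I) (hz : z ∈ I) (hw : w ∈ I)
    (hq : q ∈ I ^ m) : x * y * z * w * q ∈ I ^ k := by
  subst hk
  have hxy : x * y * z * w * q = ((x * y) * (z * w)) * q := by ring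
  rw [hxy, pow_add, show (4 : ℕ) = 2 + 2 from rfl, pow_add, pow_two]
  exact Ideal.mul_mem_mul
    (Ideal.mul_mem_mul (Ideal.mul_mem_mul hx hy) (Ideal.mul_mem_mul hz hw)) hq

set_option maxHeartbeats 2000000 in
lemma uP_mul_X_mem (hn : 1 ≤ n) {t : ℕ} (ht1 : 1 ≤ t) (ht2 : t ≤ n) (v : VarsP n) :
    uP K n hn t * X v ∈ (idealIP K n hn) ^ (2 * t) := by
  classical
  -- membership of the generators
  have m1 : pa K n ^ 6 ∈ idealIP K n hn := by
    rw [idealIP]; exact Ideal.subset_span (Set.mem_union_left _ (Set.mem_union_left _ (by simp)))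
  have m2 : pa K n ^ 5 * pb K n ∈ idealIP K n hn := by
    rw [idealIP]; exact Ideal.subset_span (Set.mem_union_left _ (Set.mem_union_left _ (by simp)))
  have m3 : pa K n * pb K n ^ 5 ∈ idealIP K n hn := by
    rw [idealIP]; exact Ideal.subset_span (Set.mem_union_left _ (Set.mem_union_left _ (by simp)))
  have m4 : pb K n ^ 6 ∈ idealIP K n hn := by
    rw [idealIP]; exact Ideal.subset_span (Set.mem_union_left _ (Set.mem_union_left _ (by simp)))
  have m5 : pa K n ^ 4 * pb K n ^ 4 * pc K n ∈ idealIP K n hn := by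
    rw [idealIP]; exact Ideal.subset_span (Set.mem_union_left _ (Set.mem_union_left _ (by simp)))
  have m6 : pa K n ^ 4 * pb K n ^ 4 * pd K n ∈ idealIP K n hn := by
    rw [idealIP]; exact Ideal.subset_span (Set.mem_union_left _ (Set.mem_union_left _ (by simp)))
  have m7 : pa K n ^ 4 * pxn K n hn ∈ idealIP K n hn := by
    rw [idealIP]; exact Ideal.subset_span (Set.mem_union_left _ (Set.mem_union_left _ (by simp)))
  have m8 : pb K n ^ 4 * pxn K n hn ^ 2 ∈ idealIP K n hn := by
    rw [idealIP]; exact Ideal.subset_span (Set.mem_union_left _ (Set.mem_union_left _ (by simp)))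
  have mA : ∀ j : Fin (n-1),
      pa K n ^ 4 * px K n (Fin.castLE (Nat.sub_le n 1) j) * py K n j ^ 2 ∈ idealIP K n hn := by
    intro j
    rw [idealIP]
    exact Ideal.subset_span (Set.mem_union_left _ (Set.mem_union_right _ ⟨j, rfl⟩))
  have mB : ∀ j : Fin (n-1),
      pb K n ^ 4 * px K n (Fin.castLE (Nat.sub_le n 1) j) ^ 2 * py K n j ∈ idealIP K n hn := by
    intro j
    rw [idealIP]
    exact Ideal.subset_span (Set.mem_union_right _ ⟨j, rfl⟩)
  -- the product and its membership
  obtain ⟨F, hFdef⟩ : ∃ F : Fin (n-1) → MvPolynomial (VarsP n) K, F = fun i : Fin (n-1) =>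
      if (i : ℕ) < t - 1 then
        (pa K n ^ 4 * px K n (Fin.castLE (Nat.sub_le n 1) i) * py K n i ^ 2) *
          (pb K n ^ 4 * px K n (Fin.castLE (Nat.sub_le n 1) i) ^ 2 * py K n i)
      else px K n (Fin.castLE (Nat.sub_le n 1) i) * py K n i := ⟨_, rfl⟩
  obtain ⟨e, hedef⟩ : ∃ e : Fin (n-1) → ℕ, e = fun i : Fin (n-1) => if (i : ℕ) < t - 1 then 2 else 0 :=
    ⟨_, rfl⟩
  have hsum : ∑ i : Fin (n-1), e i = 2 * (t - 1) := by
    rw [hedef, Fin.sum_univ_eq_sum_range (fun j => if j < t - 1 then 2 else 0), sumIteLt]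
    omega
  have hFmem : ∀ i ∈ (Finset.univ : Finset (Fin (n-1))), F i ∈ (idealIP K n hn) ^ e i := by
    intro i _
    rw [hFdef, hedef]
    dsimp only
    split_ifs with h
    · rw [pow_two]; exact Ideal.mul_mem_mul (mA i) (mB i)
    · rw [pow_zero, Ideal.one_eq_top]; trivial
  have hP : (∏ i : Fin (n-1), F i) ∈ (idealIP K n hn) ^ (2 * (t - 1)) := by
    rw [← hsum]; exact prodMemPow _ _ _ _ hFmem
  have hPe : ∀ j : Fin (n-1), (∏ i ∈ Finset.univ.erase j, F i) ∈
      (idealIP K n hn) ^ (2 * (t - 1) - e j) := by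
    intro j
    have h2 := Finset.add_sum_erase Finset.univ e (Finset.mem_univ j)
    rw [hsum] at h2
    have h3 : ∑ i ∈ Finset.univ.erase j, e i = 2 * (t - 1) - e j := by omega
    rw [← h3]
    exact prodMemPow _ _ _ _ (fun i hi => hFmem i (Finset.mem_univ i))
  have huP : uP K n hn t = pa K n ^ 8 * pb K n ^ 4 * (∏ i : Fin (n-1), F i) * pxn K n hn := by
    rw [uP, ← hFdef]
  -- case analysis on the variable
  rcases v with k | v | j
  · -- a, b, c, d
    fin_cases k
    · -- a
      show uP K n hn t * X (Sum.inl 0 : VarsP n) ∈ (idealIP K n hn) ^ (2 * t)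
      have key : uP K n hn t * X (Sum.inl 0 : VarsP n) =
          pb K n ^ 3 * ((pa K n ^ 5 * pb K n) * (pa K n ^ 4 * pxn K n hn) *
            (∏ i : Fin (n-1), F i)) := by
        rw [huP, show (X (Sum.inl 0 : VarsP n) : MvPolynomial (VarsP n) K) = pa K n from rfl]
        ring
      rw [key]
      exact Ideal.mul_mem_left _ _ (mem_pow_two_mul (by omega) m2 m7 hP)
    · -- b
      show uP K n hn t * X (Sum.inl 1 : VarsP n) ∈ (idealIP K n hn) ^ (2 * t)
      have key : uP K n hn t * X (Sum.inl 1 : VarsP n) =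
          pa K n ^ 3 * ((pa K n * pb K n ^ 5) * (pa K n ^ 4 * pxn K n hn) *
            (∏ i : Fin (n-1), F i)) := by
        rw [huP, show (X (Sum.inl 1 : VarsP n) : MvPolynomial (VarsP n) K) = pb K n from rfl]
        ring
      rw [key]
      exact Ideal.mul_mem_left _ _ (mem_pow_two_mul (by omega) m3 m7 hP)
    · -- c
      show uP K n hn t * X (Sum.inl 2 : VarsP n) ∈ (idealIP K n hn) ^ (2 * t)
      have key : uP K n hn t * X (Sum.inl 2 : VarsP n) =
          1 * ((pa K n ^ 4 * pb K n ^ 4 * pc K n) * (pa K n ^ 4 * pxn K n hn) *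
            (∏ i : Fin (n-1), F i)) := by
        rw [huP, show (X (Sum.inl 2 : VarsP n) : MvPolynomial (VarsP n) K) = pc K n from rfl]
        ring
      rw [key]
      exact Ideal.mul_mem_left _ _ (mem_pow_two_mul (by omega) m5 m7 hP)
    · -- d
      show uP K n hn t * X (Sum.inl 3 : VarsP n) ∈ (idealIP K n hn) ^ (2 * t)
      have key : uP K n hn t * X (Sum.inl 3 : VarsP n) =
          1 * ((pa K n ^ 4 * pb K n ^ 4 * pd K n) * (pa K n ^ 4 * pxn K n hn) *
            (∏ i : Fin (n-1), F i)) := by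
        rw [huP, show (X (Sum.inl 3 : VarsP n) : MvPolynomial (VarsP n) K) = pd K n from rfl]
        ring
      rw [key]
      exact Ideal.mul_mem_left _ _ (mem_pow_two_mul (by omega) m6 m7 hP)
  · -- x-variables
    by_cases hv : (v : ℕ) = n - 1
    · -- xₙ
      have hv' : v = ⟨n - 1, by omega⟩ := Fin.ext hv
      rw [hv']
      have key : uP K n hn t * X (Sum.inr (Sum.inl (⟨n - 1, by omega⟩ : Fin n)) : VarsP n) =
          pb K n ^ 4 * ((pa K n ^ 4 * pxn K n hn) * (pa K n ^ 4 * pxn K n hn) *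
            (∏ i : Fin (n-1), F i)) := by
        rw [huP,
          show (X (Sum.inr (Sum.inl (⟨n - 1, by omega⟩ : Fin n)) : VarsP n) :
            MvPolynomial (VarsP n) K) = pxn K n hn from rfl]
        ring
      rw [key]
      exact Ideal.mul_mem_left _ _ (mem_pow_two_mul (by omega) m7 m7 hP)
    · -- xⱼ for j < n
      have hvlt : (v : ℕ) < n - 1 := by omega
      set j : Fin (n-1) := ⟨(v : ℕ), hvlt⟩ with hjdef
      have hcast : Fin.castLE (Nat.sub_le n 1) j = v := rfl
      rw [← hcast]
      have hveq : (X (Sum.inr (Sum.inl (Fin.castLE (Nat.sub_le n 1) j)) : VarsP n) :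
          MvPolynomial (VarsP n) K) = px K n (Fin.castLE (Nat.sub_le n 1) j) := rfl
      have hsplitP : (∏ i : Fin (n-1), F i) = F j * ∏ i ∈ Finset.univ.erase j, F i :=
        (Finset.mul_prod_erase Finset.univ F (Finset.mem_univ j)).symm
      by_cases hj : (j : ℕ) < t - 1
      · -- j < t - 1 : recombination case
        have hFj : F j = (pa K n ^ 4 * px K n (Fin.castLE (Nat.sub_le n 1) j) * py K n j ^ 2) *
            (pb K n ^ 4 * px K n (Fin.castLE (Nat.sub_le n 1) j) ^ 2 * py K n j) := by
          rw [hFdef]; exact if_pos hj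
        have key : uP K n hn t * X (Sum.inr (Sum.inl (Fin.castLE (Nat.sub_le n 1) j)) : VarsP n) =
            (pa K n ^ 2 * py K n j) * (pa K n ^ 6 * (pa K n ^ 4 * pxn K n hn) *
              (pb K n ^ 4 * px K n (Fin.castLE (Nat.sub_le n 1) j) ^ 2 * py K n j) *
              (pb K n ^ 4 * px K n (Fin.castLE (Nat.sub_le n 1) j) ^ 2 * py K n j) *
              (∏ i ∈ Finset.univ.erase j, F i)) := by
          rw [huP, hveq, hsplitP, hFj]; ring
        rw [key]
        have hej : e j = 2 := by rw [hedef]; exact if_pos hj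
        refine Ideal.mul_mem_left _ _ (mem_pow_four_mul ?_ m1 m7 (mB j) (mB j) (hPe j))
        rw [hej]; omega
      · -- j ≥ t - 1 : free case
        have hFj : F j = px K n (Fin.castLE (Nat.sub_le n 1) j) * py K n j := by
          rw [hFdef]; exact if_neg hj
        have key : uP K n hn t * X (Sum.inr (Sum.inl (Fin.castLE (Nat.sub_le n 1) j)) : VarsP n) =
            pa K n ^ 4 * ((pb K n ^ 4 * px K n (Fin.castLE (Nat.sub_le n 1) j) ^ 2 * py K n j) *
              (pa K n ^ 4 * pxn K n hn) * (∏ i ∈ Finset.univ.erase j, F i)) := by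
          rw [huP, hveq, hsplitP, hFj]; ring
        rw [key]
        have hej : e j = 0 := by rw [hedef]; exact if_neg hj
        refine Ideal.mul_mem_left _ _ (mem_pow_two_mul ?_ (mB j) m7 (hPe j))
        rw [hej]; omega
  · -- y-variables
    have hveq : X (Sum.inr (Sum.inr j) : VarsP n) = py K n j := rfl
    have hsplitP : (∏ i : Fin (n-1), F i) = F j * ∏ i ∈ Finset.univ.erase j, F i :=
      (Finset.mul_prod_erase Finset.univ F (Finset.mem_univ j)).symm
    by_cases hj : (j : ℕ) < t - 1
    · have hFj : F j = (pa K n ^ 4 * px K n (Fin.castLE (Nat.sub_le n 1) j) * py K n j ^ 2) *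
          (pb K n ^ 4 * px K n (Fin.castLE (Nat.sub_le n 1) j) ^ 2 * py K n j) := by
        rw [hFdef]; exact if_pos hj
      have key : uP K n hn t * X (Sum.inr (Sum.inr j) : VarsP n) =
          (pb K n ^ 2 * px K n (Fin.castLE (Nat.sub_le n 1) j)) *
            (pb K n ^ 6 * (pa K n ^ 4 * pxn K n hn) *
            (pa K n ^ 4 * px K n (Fin.castLE (Nat.sub_le n 1) j) * py K n j ^ 2) *
            (pa K n ^ 4 * px K n (Fin.castLE (Nat.sub_le n 1) j) * py K n j ^ 2) *
            (∏ i ∈ Finset.univ.erase j, F i)) := by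
        rw [huP, hveq, hsplitP, hFj]; ring
      rw [key]
      have hej : e j = 2 := by rw [hedef]; exact if_pos hj
      refine Ideal.mul_mem_left _ _ (mem_pow_four_mul ?_ m4 m7 (mA j) (mA j) (hPe j))
      rw [hej]; omega
    · have hFj : F j = px K n (Fin.castLE (Nat.sub_le n 1) j) * py K n j := by
        rw [hFdef]; exact if_neg hj
      have key : uP K n hn t * X (Sum.inr (Sum.inr j) : VarsP n) =
          pb K n ^ 4 * ((pa K n ^ 4 * px K n (Fin.castLE (Nat.sub_le n 1) j) * py K n j ^ 2) *
            (pa K n ^ 4 * pxn K n hn) * (∏ i ∈ Finset.univ.erase j, F i)) := by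
        rw [huP, hveq, hsplitP, hFj]; ring
      rw [key]
      have hej : e j = 0 := by rw [hedef]; exact if_neg hj
      refine Ideal.mul_mem_left _ _ (mem_pow_two_mul ?_ (mA j) m7 (hPe j))
      rw [hej]; omega
lemma uP_mem_colon (hn : 1 ≤ n) {t : ℕ} (ht1 : 1 ≤ t) (ht2 : t ≤ n) :
    uP K n hn t ∈ ((idealIP K n hn) ^ (2 * t)).colon (mMaxP K n) := by
  rw [Submodule.mem_colon]
  intro p hp
  rw [mMaxP] at hp
  induction hp using Submodule.span_induction with
  | mem x hx =>
    obtain ⟨v, rfl⟩ := hx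
    rw [smul_eq_mul]
    exact uP_mul_X_mem hn ht1 ht2 v
  | zero => rw [smul_zero]; exact Submodule.zero_mem _
  | add x y hx hy ihx ihy => rw [smul_add]; exact Submodule.add_mem _ ihx ihy
  | smul r x hx ih =>
    rw [smul_comm]
    exact Submodule.smul_mem _ r ih
/-- For every even integer `k = 2t` with `1 ≤ t ≤ n`, the monomial `u'` satisfies
`u' ∈ (I(P)ᵏ : m(P))` and `u' ∉ I(P)ᵏ`; in particular `depth(S(P)/I(P)ᵏ) = 0`. -/
theorem uP_witness (hn : 1 ≤ n) (t : ℕ) (ht1 : 1 ≤ t) (ht2 : t ≤ n) :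
    uP K n hn t ∈ ((idealIP K n hn) ^ (2 * t)).colon (mMaxP K n) ∧
    uP K n hn t ∉ ((idealIP K n hn) ^ (2 * t) : Ideal (MvPolynomial (VarsP n) K)) ∧
    depthWrt (mMaxP K n) (MvPolynomial (VarsP n) K ⧸ (idealIP K n hn) ^ (2 * t)) = 0 := by
  have hcolon := uP_mem_colon (K := K) hn ht1 ht2
  have hnot := uP_not_mem_pow (K := K) hn ht1 ht2
  refine ⟨hcolon, hnot, ?_⟩
  rw [depthWrt]
  refine le_antisymm (sSup_le ?_) zero_le
  rintro k ⟨rs, hlen, hmem, hreg⟩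
  rcases rs with _ | ⟨r, rs'⟩
  · simp only [List.length_nil, Nat.cast_zero] at hlen
    exact hlen ▸ le_rfl
  · exfalso
    have hsmul : IsSMulRegular
        (MvPolynomial (VarsP n) K ⧸ (idealIP K n hn) ^ (2 * t)) r :=
      ((RingTheory.Sequence.isRegular_cons_iff _ _ _).mp hreg).1
    have hr : r ∈ mMaxP K n := hmem r List.mem_cons_self
    have hru : r * uP K n hn t ∈ (idealIP K n hn) ^ (2 * t) := by
      have := Submodule.mem_colon.mp hcolon r hr
      rwa [smul_eq_mul, mul_comm (uP K n hn t) r] at this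
    have hzero : r • (Submodule.Quotient.mk (uP K n hn t) :
        MvPolynomial (VarsP n) K ⧸ (idealIP K n hn) ^ (2 * t)) = 0 := by
      rw [← Submodule.Quotient.mk_smul, smul_eq_mul]
      exact (Submodule.Quotient.mk_eq_zero _).mpr hru
    have huq : (Submodule.Quotient.mk (uP K n hn t) :
        MvPolynomial (VarsP n) K ⧸ (idealIP K n hn) ^ (2 * t)) = 0 := by
      apply hsmul
      show r • _ = r • (0 : MvPolynomial (VarsP n) K ⧸ (idealIP K n hn) ^ (2 * t))
      rw [hzero, smul_zero]
    exact hnot ((Submodule.Quotient.mk_eq_zero _).mp huq)
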